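/- There exists no C² function u : ℝ² → ℝ satisfying L_u(L_u u) = 0 on all of ℝ² together with the initial conditions u(x,0) = −x and (L_u u)(x,0) = x/2 for all x ∈ ℝ. -/

import Mathlib

/-- The operator `L_u` acting on `v`:  `(L_u v)(x,t) = ∂v/∂t + u·∂v/∂x`,
with coordinates `(x,t)` on `ℝ × ℝ`. -/
noncomputable def Lop (u v : ℝ × ℝ → ℝ) : ℝ × ℝ → ℝ :=
  fun p => fderiv ℝ v p (0, 1) + u p * fderiv ℝ v p (1, 0)

/-!
For a solution of `L_u (L_u u) = 0`, the quantity `w = L_u u` is constant along characteristics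
and `u` grows linearly along them, so the characteristic from `(x₀, 0)` is the parabola
`x₀ + u(x₀,0) t + w(x₀,0) t² / 2`. Rather than assuming a characteristic flow, we check this by
Gronwall: the deviation of `(u, w)` along the parabola from the predicted values solves a linear
homogeneous system with zero initial value. For the data `u(x,0) = -x`, `w(x,0) = x/2` the
parabola is `x₀ (1 - t/2)²`, so all characteristics meet at `(0, 2)`, where `w` would have to
equal `x₀ / 2` for every `x₀`.
-/

open Set

theorem eq_zero_of_norm_deriv_le_mul_norm {E : Type*} [NormedAddCommGroup E] [NormedSpace ℝ E]
    {f f' : ℝ → E} {k : ℝ → ℝ} {a b : ℝ} (hk : ContinuousOn k (Icc a b))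
    (hf : ContinuousOn f (Icc a b)) (hf' : ∀ t ∈ Ico a b, HasDerivWithinAt f (f' t) (Ici t) t)
    (bound : ∀ t ∈ Ico a b, ‖f' t‖ ≤ k t * ‖f t‖) (ha : f a = 0) :
    ∀ t ∈ Icc a b, f t = 0 := by
  obtain ⟨K, hK⟩ := isCompact_Icc.bddAbove_image hk
  have bound' : ∀ t ∈ Ico a b, ‖f' t‖ ≤ max K 0 * ‖f t‖ + 0 := fun t ht => by
    have hkK : k t ≤ max K 0 :=
      (hK (mem_image_of_mem k (Ico_subset_Icc_self ht))).trans (le_max_left _ _)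
    rw [add_zero]
    exact (bound t ht).trans (mul_le_mul_of_nonneg_right hkK (norm_nonneg _))
  intro t ht
  have := norm_le_gronwallBound_of_norm_deriv_right_le (δ := 0) hf hf' (by simp [ha]) bound' t ht
  rwa [gronwallBound_ε0_δ0, norm_le_zero_iff] at this

theorem ContinuousLinearMap.apply_prod_eq (L : ℝ × ℝ →L[ℝ] ℝ) (a b : ℝ) :
    L (a, b) = a * L (1, 0) + b * L (0, 1) := by
  have : ((a, b) : ℝ × ℝ) = a • ((1 : ℝ), (0 : ℝ)) + b • ((0 : ℝ), (1 : ℝ)) := by simp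
  rw [this, map_add, map_smul, map_smul, smul_eq_mul, smul_eq_mul]

theorem norm_prod_sub_mul_neg_mul_le (F G p q : ℝ) :
    ‖((G - F * p, -(F * q)) : ℝ × ℝ)‖ ≤ (1 + |p| + |q|) * ‖((F, G) : ℝ × ℝ)‖ := by
  have hF : |F| ≤ ‖((F, G) : ℝ × ℝ)‖ := le_max_left _ _
  have hG : |G| ≤ ‖((F, G) : ℝ × ℝ)‖ := le_max_right _ _
  have hp := mul_le_mul_of_nonneg_right hF (abs_nonneg p)
  have hq := mul_le_mul_of_nonneg_right hF (abs_nonneg q)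
  refine max_le ?_ ?_
  · calc |G - F * p| ≤ |G| + |F| * |p| := by rw [← abs_mul]; exact abs_sub _ _
      _ ≤ (1 + |p| + |q|) * ‖((F, G) : ℝ × ℝ)‖ := by
        nlinarith [abs_nonneg q, norm_nonneg ((F, G) : ℝ × ℝ)]
  · rw [Real.norm_eq_abs, abs_neg, abs_mul]
    nlinarith [abs_nonneg p, norm_nonneg ((F, G) : ℝ × ℝ)]

theorem ContDiff.lop {n : WithTop ℕ∞} {u v : ℝ × ℝ → ℝ} (hu : ContDiff ℝ n u)
    (hv : ContDiff ℝ (n + 1) v) : ContDiff ℝ n (Lop u v) := by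
  have hdv := hv.fderiv_right le_rfl
  exact (hdv.clm_apply contDiff_const).add (hu.mul (hdv.clm_apply contDiff_const))

theorem hasDerivAt_comp_graph {u v : ℝ × ℝ → ℝ} {X : ℝ → ℝ} {X' t : ℝ}
    (hv : DifferentiableAt ℝ v (X t, t)) (hX : HasDerivAt X X' t) :
    HasDerivAt (fun s => v (X s, s))
      (Lop u v (X t, t) + (X' - u (X t, t)) * fderiv ℝ v (X t, t) (1, 0)) t := by
  refine (hv.hasFDerivAt.comp_hasDerivAt (f := fun s => (X s, s)) t
    (hX.prodMk (hasDerivAt_id t))).congr_deriv ?_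
  rw [ContinuousLinearMap.apply_prod_eq, Lop]
  ring

theorem lop_self_eq_on_characteristic {u : ℝ × ℝ → ℝ} (hu : ContDiff ℝ 2 u)
    (hpde : ∀ p, Lop u (Lop u u) p = 0) (x₀ : ℝ) {T : ℝ} (hT : 0 ≤ T) :
    Lop u u (x₀ + u (x₀, 0) * T + Lop u u (x₀, 0) * T ^ 2 / 2, T) = Lop u u (x₀, 0) := by
  set w := Lop u u
  set a := u (x₀, 0)
  set b := w (x₀, 0)
  set X : ℝ → ℝ := fun t => x₀ + a * t + b * t ^ 2 / 2
  have hX : ∀ t, HasDerivAt X (a + b * t) t := fun t => by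
    refine ((((hasDerivAt_id t).const_mul a).const_add x₀).add
      (((hasDerivAt_pow 2 t).const_mul b).div_const 2)).congr_deriv ?_
    norm_num; ring
  have hw : ContDiff ℝ 1 w := (hu.of_le (by norm_num)).lop (hu.of_le (by norm_num))
  have hud : Differentiable ℝ u := hu.differentiable (by norm_num)
  have hwd : Differentiable ℝ w := hw.differentiable (by norm_num)
  set ux : ℝ → ℝ := fun t => fderiv ℝ u (X t, t) (1, 0)
  set wx : ℝ → ℝ := fun t => fderiv ℝ w (X t, t) (1, 0)
  set f : ℝ → ℝ × ℝ := fun t => (u (X t, t) - (a + b * t), w (X t, t) - b)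
  have hf : ∀ t, HasDerivAt f (((f t).2 - (f t).1 * ux t, -((f t).1 * wx t))) t := fun t => by
    have hu' := (hasDerivAt_comp_graph (u := u) (hud _) (hX t)).sub
      (((hasDerivAt_id t).const_mul b).const_add a)
    have hw' := (hasDerivAt_comp_graph (u := u) (hwd _) (hX t)).sub_const b
    refine (hu'.prodMk hw').congr_deriv ?_
    rw [hpde]
    ext <;> simp only [f, ux, wx, w] <;> ring
  have hXc : Continuous fun t => (X t, t) := by fun_prop
  have hk : Continuous fun t => 1 + |ux t| + |wx t| := by
    have := (hu.continuous_fderiv (by norm_num)).comp hXc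
    have := (hw.continuous_fderiv (by norm_num)).comp hXc
    fun_prop
  have hf_zero := eq_zero_of_norm_deriv_le_mul_norm hk.continuousOn
    (continuous_iff_continuousAt.2 fun t => (hf t).continuousAt).continuousOn
    (fun t _ => (hf t).hasDerivWithinAt) (fun t _ => norm_prod_sub_mul_neg_mul_le _ _ _ _)
    (by simp [f, X, a, b]) T ⟨hT, le_rfl⟩
  exact sub_eq_zero.1 (congrArg Prod.snd hf_zero)

theorem stmt13 :
    ¬ ∃ u : ℝ × ℝ → ℝ, ContDiff ℝ 2 u ∧ (∀ p : ℝ × ℝ, Lop u (Lop u u) p = 0) ∧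
      (∀ x : ℝ, u (x, 0) = -x) ∧ (∀ x : ℝ, Lop u u (x, 0) = x / 2) := by
  rintro ⟨u, hu, hpde, hinit, hw0⟩
  have h0 := lop_self_eq_on_characteristic hu hpde 0 zero_le_two
  have h1 := lop_self_eq_on_characteristic hu hpde 1 zero_le_two
  rw [hinit, hw0] at h0 h1
  norm_num at h0 h1
  rw [h0] at h1
  norm_num at h1
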